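/- Let Γ be a group generated by a finite symmetric set S = S⁻¹ ⊆ Γ, let D ⊆ Γ be finite and nonempty, and let λ > 0 be a real number such that γ_S(n) ≥ λ·|D| for some n ∈ ℕ (so that φ_S(λ·|D|) is finite). Then |∂_S D| · φ_S(λ·|D|) ≥ (1 − 1/λ) · |D|. -/

import Mathlib

open scoped Pointwise

variable {G : Type*} [Group G] [DecidableEq G]

/-- The ball of radius `r` in the word metric: elements of `G` expressible as
a product of at most `r` elements of `S`. -/
def wordBall (S : Finset G) : ℕ → Finset G
  | 0 => {1}
  | r + 1 => wordBall S r ∪ S * wordBall S r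

/-- The inner boundary of a finite set `D` with respect to the generating set `S`. -/
def innerBoundary (S D : Finset G) : Finset G :=
  D.filter fun x => ∃ s ∈ S, s * x ∉ D

/-!
For `g` in the ball of radius `n = φ_S(λ|D|)`, the set `D \ g D` has at most `n |∂_S D|`
elements, since `D \ (a b) D ⊆ (D \ a D) ∪ a (D \ b D)` and `D \ s D ⊆ ∂_S D` for `s ∈ S`.
On the other hand `∑_{g ∈ B} |D ∩ g D| ≤ |D|²`, so some `g` in the ball `B`, which has at least
`λ |D|` elements, satisfies `|D ∩ g D| ≤ |D| / λ`, i.e. `|D \ g D| ≥ (1 - 1/λ) |D|`.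
-/

open Finset

lemma one_mem_wordBall (S : Finset G) (n : ℕ) : (1 : G) ∈ wordBall S n := by
  induction n with
  | zero => simp [wordBall]
  | succ n ih => simp [wordBall, ih]

lemma card_sdiff_mul_smul_le (D : Finset G) (a b : G) :
    #(D \ (a * b) • D) ≤ #(D \ a • D) + #(D \ b • D) :=
  calc #(D \ (a * b) • D) ≤ #((D \ a • D) ∪ (a • D \ (a * b) • D)) :=
        card_le_card (sdiff_triangle _ _ _)
    _ ≤ #(D \ a • D) + #(a • (D \ b • D)) := by
        rw [smul_finset_sdiff, mul_smul]
        exact card_union_le _ _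
    _ = #(D \ a • D) + #(D \ b • D) := by rw [card_smul_finset]

lemma sdiff_smul_subset_innerBoundary {S : Finset G} (hsymm : ∀ s ∈ S, s⁻¹ ∈ S)
    (D : Finset G) {s : G} (hs : s ∈ S) : D \ s • D ⊆ innerBoundary S D := by
  intro x hx
  rw [mem_sdiff, ← inv_smul_mem_iff, smul_eq_mul] at hx
  exact mem_filter.mpr ⟨hx.1, s⁻¹, hsymm s hs, hx.2⟩

lemma card_sdiff_smul_le_of_mem_wordBall {S : Finset G} (hsymm : ∀ s ∈ S, s⁻¹ ∈ S)
    (D : Finset G) {n : ℕ} {g : G} (hg : g ∈ wordBall S n) :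
    #(D \ g • D) ≤ n * #(innerBoundary S D) := by
  induction n generalizing g with
  | zero =>
    rw [wordBall, mem_singleton] at hg
    simp [hg]
  | succ n ih =>
    rw [wordBall, mem_union, mem_mul] at hg
    rcases hg with hg | ⟨s, hs, h, hh, rfl⟩
    · exact (ih hg).trans (Nat.mul_le_mul_right _ n.le_succ)
    · calc #(D \ (s * h) • D) ≤ #(D \ s • D) + #(D \ h • D) := card_sdiff_mul_smul_le D s h
        _ ≤ #(innerBoundary S D) + n * #(innerBoundary S D) :=
          add_le_add (card_le_card (sdiff_smul_subset_innerBoundary hsymm D hs)) (ih hh)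
        _ = (n + 1) * #(innerBoundary S D) := by ring

lemma sum_card_inter_smul_le (A C B : Finset G) : ∑ g ∈ B, #(A ∩ g • C) ≤ #A * #C :=
  calc ∑ g ∈ B, #(A ∩ g • C) = #{ab ∈ A ×ˢ C⁻¹ | ab.1 * ab.2 ∈ B} := by
        simp only [card_inter_smul, ← card_mul_eq, sum_card_fiberwise_eq_card_filter]
    _ ≤ #(A ×ˢ C⁻¹) := card_filter_le _ _
    _ = #A * #C := by rw [card_product, card_inv]

lemma exists_card_mul_card_inter_smul_le (A : Finset G) {B : Finset G} (hB : B.Nonempty) :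
    ∃ g ∈ B, #B * #(A ∩ g • A) ≤ #A * #A := by
  obtain ⟨g, hg, hmin⟩ := B.exists_min_image (fun g => #(A ∩ g • A)) hB
  exact ⟨g, hg, (card_nsmul_le_sum B _ _ hmin).trans (sum_card_inter_smul_le A A B)⟩

lemma exists_card_inter_smul_le_div (A : Finset G) {B : Finset G} (hB : B.Nonempty)
    {lam : ℝ} (hlam : 0 < lam) (hAB : lam * #A ≤ #B) :
    ∃ g ∈ B, (#(A ∩ g • A) : ℝ) ≤ #A / lam := by
  obtain ⟨g, hg, hinter⟩ := exists_card_mul_card_inter_smul_le A hB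
  refine ⟨g, hg, (le_div_iff₀ hlam).mpr ?_⟩
  obtain rfl | hA := A.eq_empty_or_nonempty
  · simp
  have hinter' : (#B : ℝ) * #(A ∩ g • A) ≤ #A * #A := by exact_mod_cast hinter
  have : #(A ∩ g • A) * lam * #A ≤ #A * #A := by nlinarith
  exact le_of_mul_le_mul_right this (by exact_mod_cast hA.card_pos)

theorem stmt4_general (S : Finset G)
    (hsymm : ∀ s ∈ S, s⁻¹ ∈ S)
    (D : Finset G) (lam : ℝ) (hlam : 0 < lam)
    (hex : ∃ n : ℕ, lam * (D.card : ℝ) ≤ ((wordBall S n).card : ℝ)) :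
    (1 - 1 / lam) * (D.card : ℝ) ≤
      ((innerBoundary S D).card : ℝ) *
        ((sInf {n : ℕ | lam * (D.card : ℝ) ≤ ((wordBall S n).card : ℝ)} : ℕ) : ℝ) := by
  set n := sInf {n : ℕ | lam * (D.card : ℝ) ≤ ((wordBall S n).card : ℝ)}
  obtain ⟨g, hg, hinter⟩ :=
    exists_card_inter_smul_le_div D ⟨1, one_mem_wordBall S n⟩ hlam (Nat.sInf_mem hex)
  have hsdiff : (#(D \ g • D) : ℝ) ≤ n * #(innerBoundary S D) := by
    exact_mod_cast card_sdiff_smul_le_of_mem_wordBall hsymm D hg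
  have hsplit : (#(D \ g • D) : ℝ) + #(D ∩ g • D) = #D := by
    exact_mod_cast card_sdiff_add_card_inter D (g • D)
  calc (1 - 1 / lam) * #D = #D - #D / lam := by ring
    _ ≤ #(D \ g • D) := by linarith
    _ ≤ n * #(innerBoundary S D) := hsdiff
    _ = #(innerBoundary S D) * n := mul_comm _ _

theorem stmt4 (S : Finset G)
    (hsymm : ∀ s ∈ S, s⁻¹ ∈ S) (hgen : Subgroup.closure (S : Set G) = ⊤)
    (D : Finset G) (hD : D.Nonempty) (lam : ℝ) (hlam : 0 < lam)
    (hex : ∃ n : ℕ, lam * (D.card : ℝ) ≤ ((wordBall S n).card : ℝ)) :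
    (1 - 1 / lam) * (D.card : ℝ) ≤
      ((innerBoundary S D).card : ℝ) *
        ((sInf {n : ℕ | lam * (D.card : ℝ) ≤ ((wordBall S n).card : ℝ)} : ℕ) : ℝ) :=
  stmt4_general S hsymm D lam hlam hex
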